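/- Let x be a decision node and i a buyer with f_i(x) > 1 and κ_i(x) < t. Then β_i(x + e_i) ≥ p_i(x), and equality holds only if μ̄_i(κ_i(x+e_i) + 1 | x) = μ_i(x). Moreover, p_i(x + e_i) ≥ p_i(x). -/

import Mathlib

open Finset

noncomputable section

/-- The opponent of buyer `i`. -/
def other (i : Fin 2) : Fin 2 := 1 - i

/-- The standard unit vector of buyer `i`: winning one item moves `x` to `x + e i`. -/
def e (i : Fin 2) : Fin 2 → ℕ := Pi.single i 1

/-- Remaining supply `t(x) = T - x₁ - x₂` at node `x`. -/
def supply (T : ℕ) (x : Fin 2 → ℕ) : ℕ := T - (x 0 + x 1)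

/-- `x` is a decision node: `x₁ + x₂ < T`. -/
def IsDecision (T : ℕ) (x : Fin 2 → ℕ) : Prop := x 0 + x 1 < T

/-- Incremental value `v_i(k|x) = v_i(x_i + k)`. -/
def val (v : Fin 2 → ℕ → ℝ) (i : Fin 2) (k : ℕ) (x : Fin 2 → ℕ) : ℝ := v i (x i + k)

/-- Valuations are nonnegative and weakly decreasing. -/
def Admissible (v : Fin 2 → ℕ → ℝ) : Prop := ∀ i k, 0 ≤ v i k ∧ v i (k + 1) ≤ v i k

/-- Greedy payoff `μ̄_i(k|x) = Σ_{j=1}^k v_i(j|x) - k · v_{-i}(t-k+1|x)`. -/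
def gbar (T : ℕ) (v : Fin 2 → ℕ → ℝ) (i : Fin 2) (k : ℕ) (x : Fin 2 → ℕ) : ℝ :=
  (∑ j ∈ Finset.Icc 1 k, val v i j x) - (k : ℝ) * val v (other i) (supply T x - k + 1) x

/-- Greedy utility `μ_i(x) = max_{0 ≤ k ≤ t} μ̄_i(k|x)` (equal to `0` at terminal nodes). -/
def gu (T : ℕ) (v : Fin 2 → ℕ → ℝ) (i : Fin 2) (x : Fin 2 → ℕ) : ℝ :=
  Finset.sup' (Finset.range (supply T x + 1)) Finset.nonempty_range_add_one
    (fun k => gbar T v i k x)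

/-- Greedy demand `κ_i(x)`: the least `k ∈ {0,…,t}` attaining the greedy utility. -/
def gd (T : ℕ) (v : Fin 2 → ℕ → ℝ) (i : Fin 2) (x : Fin 2 → ℕ) : ℕ :=
  sInf {k | k ≤ supply T x ∧ gbar T v i k x = gu T v i x}

/-- Duopsony factor `f_i(x) = max ({k ∈ {1,…,t} : v_i(k|x) > v_{-i}(t-k+1|x)} ∪ {0})`. -/
def df (T : ℕ) (v : Fin 2 → ℕ → ℝ) (i : Fin 2) (x : Fin 2 → ℕ) : ℕ :=
  sSup {k | 1 ≤ k ∧ k ≤ supply T x ∧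
    val v (other i) (supply T x - k + 1) x < val v i k x}

/-- Baseline price `β_i(x)`. -/
def base (T : ℕ) (v : Fin 2 → ℕ → ℝ) (i : Fin 2) (x : Fin 2 → ℕ) : ℝ :=
  if df T v i x = 0 then val v i 1 x
  else val v (other i) (supply T x - gd T v i x + 1) x

/-- Threshold price `p_i(x) = v_i(1|x) + μ_i(x+e_i) - μ_i(x+e_{-i})`. -/
def tp (T : ℕ) (v : Fin 2 → ℕ → ℝ) (i : Fin 2) (x : Fin 2 → ℕ) : ℝ :=
  val v i 1 x + gu T v i (x + e i) - gu T v i (x + e (other i))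

/-!
Winning one item shifts buyer `i`'s greedy payoffs by one unit,
`μ̄_i(k | x + e_i) = μ̄_i(k + 1 | x) + v_{-i}(t - k | x) - v_i(1 | x)`,
while losing one item leaves `μ̄_i(k | ·)` unchanged for `k < t`, hence leaves `μ_i` unchanged
when `κ_i(x) < t`. With `κ' = κ_i(x + e_i)` this gives
`β_i(x + e_i) - p_i(x) = μ_i(x) - μ̄_i(κ' + 1 | x) ≥ 0`.
The same shift, applied at any node `y` with `f_i(y) > 0`, shows `β_i(y) ≤ p_i(y)`; since
`f_i(x) > 1` forces `f_i(x + e_i) > 0`, this yields `p_i(x) ≤ β_i(x + e_i) ≤ p_i(x + e_i)`.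
-/

section

variable {T : ℕ} {v : Fin 2 → ℕ → ℝ} {i : Fin 2} {x : Fin 2 → ℕ}

lemma other_ne_self (i : Fin 2) : other i ≠ i := by
  fin_cases i <;> decide

lemma supply_add_e (x : Fin 2 → ℕ) (i : Fin 2) : supply T (x + e i) = supply T x - 1 := by
  have hsum : (x + e i) 0 + (x + e i) 1 = x 0 + x 1 + 1 := by
    fin_cases i <;> simp [e] <;> ring
  unfold supply
  omega

lemma val_add_e_self (k : ℕ) : val v i k (x + e i) = val v i (k + 1) x := by
  simp only [_root_.val, e, Pi.add_apply, Pi.single_eq_same, add_assoc, add_comm 1 k]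

lemma val_add_e_of_ne {j : Fin 2} (h : j ≠ i) (k : ℕ) : val v j k (x + e i) = val v j k x := by
  simp [_root_.val, e, Pi.single_eq_of_ne h]

lemma Admissible.val_anti (hv : Admissible v) {j k : ℕ} (h : j ≤ k) :
    val v i k x ≤ val v i j x :=
  antitone_nat_of_succ_le (fun n => (hv i n).2) (Nat.add_le_add_left h _)

lemma sum_Icc_one_shift {M : Type*} [AddCommGroup M] (f : ℕ → M) (k : ℕ) :
    ∑ j ∈ Icc 1 k, f (j + 1) = (∑ j ∈ Icc 1 (k + 1), f j) - f 1 := by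
  induction k with
  | zero => simp
  | succ n ih =>
    rw [sum_Icc_succ_top (by omega), ih, sum_Icc_succ_top (by omega : 1 ≤ n + 1 + 1)]
    abel

lemma gbar_zero : gbar T v i 0 x = 0 := by
  simp [gbar]

lemma gbar_one (h : 0 < supply T x) :
    gbar T v i 1 x = val v i 1 x - val v (other i) (supply T x) x := by
  simp [gbar, Nat.sub_add_cancel h]

lemma gbar_add_e_self {k : ℕ} (h : k < supply T x) :
    gbar T v i k (x + e i)
      = gbar T v i (k + 1) x + val v (other i) (supply T x - k) x - val v i 1 x := by
  have hsum : ∑ j ∈ Icc 1 k, val v i j (x + e i)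
      = (∑ j ∈ Icc 1 (k + 1), val v i j x) - val v i 1 x := by
    simp only [val_add_e_self]
    exact sum_Icc_one_shift (fun j => val v i j x) k
  unfold gbar
  rw [hsum, supply_add_e, val_add_e_of_ne (other_ne_self i),
    show supply T x - 1 - k + 1 = supply T x - k by omega,
    show supply T x - (k + 1) + 1 = supply T x - k by omega]
  push_cast
  ring

lemma gbar_add_e_other {k : ℕ} (h : k < supply T x) :
    gbar T v i k (x + e (other i)) = gbar T v i k x := by
  unfold gbar
  simp only [val_add_e_of_ne (other_ne_self i).symm, val_add_e_self, supply_add_e]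
  rw [show supply T x - 1 - k + 1 + 1 = supply T x - k + 1 by omega]

lemma gbar_le_gu {k : ℕ} (h : k ≤ supply T x) : gbar T v i k x ≤ gu T v i x :=
  le_sup' (fun k => gbar T v i k x) (mem_range.mpr (Nat.lt_succ_of_le h))

variable (T v i x) in
lemma gu_nonneg : 0 ≤ gu T v i x :=
  gbar_zero.symm.trans_le (gbar_le_gu (Nat.zero_le _))

variable (T v i x) in
lemma gd_spec : gd T v i x ≤ supply T x ∧ gbar T v i (gd T v i x) x = gu T v i x := by
  obtain ⟨k, hk, hmax⟩ := exists_mem_eq_sup' nonempty_range_add_one (fun k => gbar T v i k x)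
  have hne : {k | k ≤ supply T x ∧ gbar T v i k x = gu T v i x}.Nonempty :=
    ⟨k, Nat.lt_succ_iff.mp (mem_range.mp hk), hmax.symm⟩
  exact Nat.sInf_mem hne

variable (T v i x) in
lemma gu_add_e_other_le : gu T v i (x + e (other i)) ≤ gu T v i x := by
  refine sup'_le _ _ fun k hk => ?_
  rw [mem_range, supply_add_e] at hk
  rcases k with _ | k
  · exact gbar_zero.trans_le (gu_nonneg T v i x)
  · rw [gbar_add_e_other (by omega)]
    exact gbar_le_gu (by omega)

lemma gu_add_e_other (hk : gd T v i x < supply T x) :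
    gu T v i (x + e (other i)) = gu T v i x := by
  refine le_antisymm (gu_add_e_other_le T v i x) ?_
  rw [← (gd_spec T v i x).2, ← gbar_add_e_other hk]
  exact gbar_le_gu (by rw [supply_add_e]; omega)

lemma gd_add_e_self_lt_supply (h : 0 < supply T x) : gd T v i (x + e i) < supply T x := by
  have := (gd_spec T v i (x + e i)).1
  rw [supply_add_e] at this
  omega

lemma gu_add_e_self (h : 0 < supply T x) :
    gu T v i (x + e i) = gbar T v i (gd T v i (x + e i) + 1) x
      + val v (other i) (supply T x - gd T v i (x + e i)) x - val v i 1 x := by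
  rw [← (gd_spec T v i (x + e i)).2, gbar_add_e_self (gd_add_e_self_lt_supply h)]

lemma gbar_add_val_sub_gu_le_tp {k : ℕ} (h : k < supply T x) :
    gbar T v i (k + 1) x + val v (other i) (supply T x - k) x - gu T v i x ≤ tp T v i x := by
  have hwin : gbar T v i k (x + e i) ≤ gu T v i (x + e i) :=
    gbar_le_gu (by rw [supply_add_e]; omega)
  rw [gbar_add_e_self h] at hwin
  unfold tp
  linarith [gu_add_e_other_le T v i x]

lemma df_spec (h : df T v i x ≠ 0) :
    1 ≤ df T v i x ∧ df T v i x ≤ supply T x ∧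
      val v (other i) (supply T x - df T v i x + 1) x < val v i (df T v i x) x := by
  have hne : {k | 1 ≤ k ∧ k ≤ supply T x ∧
      val v (other i) (supply T x - k + 1) x < val v i k x}.Nonempty := by
    by_contra hempty
    exact h (by rw [df, Set.not_nonempty_iff_eq_empty.mp hempty, csSup_empty, bot_eq_zero])
  exact Nat.sSup_mem hne ⟨supply T x, fun k hk => hk.2.1⟩

lemma df_add_e_self_ne_zero (hf : 1 < df T v i x) : df T v i (x + e i) ≠ 0 := by
  obtain ⟨-, hle, hlt⟩ := df_spec (Nat.ne_zero_of_lt hf)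
  have hmem : df T v i x - 1 ∈ {k | 1 ≤ k ∧ k ≤ supply T (x + e i) ∧
      val v (other i) (supply T (x + e i) - k + 1) (x + e i) < val v i k (x + e i)} := by
    refine ⟨by omega, by rw [supply_add_e]; omega, ?_⟩
    rwa [supply_add_e, val_add_e_of_ne (other_ne_self i), val_add_e_self,
      show supply T x - 1 - (df T v i x - 1) + 1 = supply T x - df T v i x + 1 by omega,
      Nat.sub_add_cancel (by omega)]
  have := le_csSup ⟨supply T (x + e i), fun k hk => hk.2.1⟩ hmem
  unfold df
  omega

lemma base_le_tp (hv : Admissible v) (hdf : df T v i x ≠ 0) : base T v i x ≤ tp T v i x := by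
  obtain ⟨hdf1, hdft, hdflt⟩ := df_spec hdf
  obtain ⟨hgdt, hgd⟩ := gd_spec T v i x
  rw [base, if_neg hdf]
  rcases Nat.eq_zero_or_pos (gd T v i x) with hgd0 | hgdpos
  · -- `p_i(x) ≥ v_i(1|x) ≥ v_i(f|x) > v_{-i}(t-f+1|x) ≥ v_{-i}(t+1|x) = β_i(x)`
    have hbound := gbar_add_val_sub_gu_le_tp (T := T) (v := v) (i := i) (x := x) (k := 0)
      (by omega)
    rw [← hgd, hgd0, gbar_zero, zero_add, gbar_one (by omega), Nat.sub_zero, sub_zero,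
      sub_add_cancel] at hbound
    rw [hgd0, Nat.sub_zero]
    linarith [hv.val_anti (i := i) (x := x) hdf1,
      hv.val_anti (i := other i) (x := x)
        (show supply T x - df T v i x + 1 ≤ supply T x + 1 by omega)]
  · have hbound := gbar_add_val_sub_gu_le_tp (T := T) (v := v) (i := i) (x := x)
      (k := gd T v i x - 1) (by omega)
    rwa [Nat.sub_add_cancel hgdpos, hgd, add_sub_cancel_left,
      show supply T x - (gd T v i x - 1) = supply T x - gd T v i x + 1 by omega] at hbound

lemma base_add_e_self_sub_tp (hdf : df T v i (x + e i) ≠ 0) (hk : gd T v i x < supply T x) :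
    base T v i (x + e i) - tp T v i x = gu T v i x - gbar T v i (gd T v i (x + e i) + 1) x := by
  have hgdt := gd_add_e_self_lt_supply (v := v) (i := i) (Nat.zero_lt_of_lt hk)
  rw [base, if_neg hdf, supply_add_e, val_add_e_of_ne (other_ne_self i), tp,
    gu_add_e_self (by omega), gu_add_e_other hk,
    show supply T x - 1 - gd T v i (x + e i) + 1 = supply T x - gd T v i (x + e i) by omega]
  ring

end

theorem stmt7_general (T : ℕ) (v : Fin 2 → ℕ → ℝ) (hv : Admissible v)
    (x : Fin 2 → ℕ) (i : Fin 2)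
    (hf : 1 < df T v i x) (hk : gd T v i x < supply T x) :
    tp T v i x ≤ base T v i (x + e i) ∧
    (base T v i (x + e i) = tp T v i x →
      gbar T v i (gd T v i (x + e i) + 1) x = gu T v i x) ∧
    tp T v i x ≤ tp T v i (x + e i) := by
  have hdf := df_add_e_self_ne_zero hf
  have hgap := base_add_e_self_sub_tp hdf hk
  have hle : gbar T v i (gd T v i (x + e i) + 1) x ≤ gu T v i x :=
    gbar_le_gu (gd_add_e_self_lt_supply (by omega))
  refine ⟨by linarith, fun heq => by linarith, ?_⟩
  linarith [base_le_tp hv hdf]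

/-- Evolution of the threshold price upon winning. -/
theorem stmt7 (T : ℕ) (v : Fin 2 → ℕ → ℝ) (hv : Admissible v)
    (x : Fin 2 → ℕ) (hx : IsDecision T x) (i : Fin 2)
    (hf : 1 < df T v i x) (hk : gd T v i x < supply T x) :
    tp T v i x ≤ base T v i (x + e i) ∧
    (base T v i (x + e i) = tp T v i x →
      gbar T v i (gd T v i (x + e i) + 1) x = gu T v i x) ∧
    tp T v i x ≤ tp T v i (x + e i) :=
  stmt7_general T v hv x i hf hk
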